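/- For any positive integer d and any finite family F of finite subsets of ℤ, the optimal piercing density is scale-invariant: π(dF) = π(F), where dF = {dS : S ∈ F} and dS = {d·x : x ∈ S}. -/

import Mathlib

/-- A shooting pattern `X` hits a ship `S` if every translate of `S` intersects `X`. -/
def Hits (X S : Set ℤ) : Prop := ∀ n : ℤ, ∃ s ∈ S, n + s ∈ X

/-- Lower asymptotic density of a set of integers. -/
noncomputable def lowerDensity (X : Set ℤ) : ℝ :=
  Filter.liminf (fun N : ℕ =>
    ((X ∩ Set.Icc (-(N:ℤ)) (N:ℤ)).ncard : ℝ) / (2 * N + 1)) Filter.atTop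

/-- Optimal piercing density of a family of ships. -/
noncomputable def piercing (F : Set (Set ℤ)) : ℝ :=
  sInf (lowerDensity '' {X | ∀ S ∈ F, Hits X S})


/-!
Blowing up a pattern `X` hitting `S` to `Y = {m | m / d ∈ X}` (each point becomes a block of `d`
consecutive integers) gives a pattern hitting `dS` of no larger lower density. Conversely, if `Y`
hits `dS`, then each residue slice `Y_r = {k | d k + r ∈ Y}`, `0 ≤ r < d`, hits `S`; the windows
`[-M, M]` of the `d` slices together count at most the points of `Y` in a window of size about
`d M`, so the lower densities of the slices sum to at most `d` times that of `Y` and one slice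
has lower density at most that of `Y`.
-/

open Filter Topology Set

theorem liminf_le_mul_liminf_of_comp_le {f g r : ℕ → ℝ} {ψ : ℕ → ℕ} {ρ : ℝ}
    (hψ : Tendsto ψ atTop atTop) (hρ : 0 < ρ) (hr : Tendsto r atTop (𝓝 ρ))
    (hf₀ : 0 ≤ f) (hf : BddAbove (range f)) (hg₀ : 0 ≤ g) (hg : BddAbove (range g))
    (h : ∀ᶠ n in atTop, f (ψ n) ≤ r n * g n) :
    liminf f atTop ≤ ρ * liminf g atTop := by
  have hr₀ : 0 ≤ᶠ[atTop] r := (hr.eventually (lt_mem_nhds hρ)).mono fun _ h => h.le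
  have hg_le := hg.isBoundedUnder_of_range (f := atTop)
  calc liminf f atTop
      ≤ liminf (f ∘ ψ) atTop :=
        liminf_le_liminf_of_le hψ (isBoundedUnder_of ⟨0, hf₀⟩)
          hf.isBoundedUnder_of_range.isCoboundedUnder_ge
    _ ≤ liminf (r * g) atTop :=
        liminf_le_liminf h (isBoundedUnder_of ⟨0, fun n => hf₀ (ψ n)⟩)
          (isBoundedUnder_le_mul_of_nonneg hr₀.frequently hr.isBoundedUnder_le
            (.of_forall hg₀) hg_le).isCoboundedUnder_ge
    _ ≤ limsup r atTop * liminf g atTop :=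
        liminf_mul_le hr₀ hr.isBoundedUnder_le (.of_forall hg₀) hg_le.isCoboundedUnder_ge
    _ = ρ * liminf g atTop := by rw [hr.limsup_eq]

theorem sum_liminf_le_liminf_sum {α ι : Type*} {l : Filter α} [l.NeBot] (s : Finset ι)
    {f : ι → α → ℝ} {C : ℝ} (h₀ : ∀ i ∈ s, 0 ≤ f i) (h₁ : ∀ i ∈ s, ∀ x, f i x ≤ C) :
    ∑ i ∈ s, liminf (f i) l ≤ liminf (fun x => ∑ i ∈ s, f i x) l := by
  classical
  induction s using Finset.induction_on with
  | empty => simp [liminf_const]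
  | insert a s ha ih =>
    simp only [Finset.forall_mem_insert] at h₀ h₁
    have hsum₀ : ∀ x, 0 ≤ ∑ i ∈ s, f i x := fun x => Finset.sum_nonneg fun i hi => h₀.2 i hi x
    have hsum₁ : ∀ x, ∑ i ∈ s, f i x ≤ s.card * C := fun x => by
      simpa using Finset.sum_le_sum fun i hi => h₁.2 i hi x
    simp only [Finset.sum_insert ha]
    calc liminf (f a) l + ∑ i ∈ s, liminf (f i) l
        ≤ liminf (f a) l + liminf (fun x => ∑ i ∈ s, f i x) l := by grw [ih h₀.2 h₁.2]
      _ ≤ liminf (fun x => f a x + ∑ i ∈ s, f i x) l :=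
        le_liminf_add (isBoundedUnder_of ⟨0, h₀.1⟩) (isBoundedUnder_of ⟨C, h₁.1⟩)
          (isBoundedUnder_of ⟨0, hsum₀⟩) (isCoboundedUnder_ge_of_le l hsum₁)

theorem tendsto_two_mul_add_one_div {ψ : ℕ → ℕ} {κ C : ℝ} (hκ : 0 < κ)
    (h : ∀ n, |κ * ψ n - n| ≤ C) :
    Tendsto (fun n : ℕ => (2 * n + 1 : ℝ) / (2 * ψ n + 1)) atTop (𝓝 κ) := by
  have hψ : Tendsto (fun n => (2 * ψ n + 1 : ℝ)) atTop atTop := by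
    refine tendsto_atTop_mono (fun n => ?_) <| tendsto_atTop_add_const_right _ 1 <|
      (tendsto_atTop_add_const_right _ (-C) (tendsto_natCast_atTop_atTop (R := ℝ))).const_mul_atTop
        (div_pos two_pos hκ)
    have : ((n : ℝ) + -C) / κ ≤ ψ n := by
      rw [div_le_iff₀ hκ]; linarith [(abs_le.1 (h n)).1]
    rw [div_mul_eq_mul_div, mul_div_assoc]
    linarith
  have herr : IsBoundedUnder (· ≤ ·) atTop
      (norm ∘ fun n : ℕ => (2 * n + 1 - κ * (2 * ψ n + 1) : ℝ)) := by
    refine isBoundedUnder_of ⟨2 * C + |1 - κ|, fun n => ?_⟩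
    calc ‖(2 * n + 1 - κ * (2 * ψ n + 1) : ℝ)‖ = |-(2 * (κ * ψ n - n)) + (1 - κ)| := by
          rw [Real.norm_eq_abs]; ring_nf
      _ ≤ 2 * C + |1 - κ| := by
          grw [abs_add_le, abs_neg, abs_mul, abs_two, h n]
  have hlim := (tendsto_const_nhds (x := κ)).add
    (isBoundedUnder_le_mul_tendsto_zero herr hψ.inv_tendsto_atTop)
  rw [add_zero] at hlim
  refine hlim.congr fun n => ?_
  have : (2 * ψ n + 1 : ℝ) ≠ 0 := by positivity
  simp only [Pi.inv_apply]
  field_simp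
  ring

theorem sInf_image_eq_of_forall_exists_le {α : Type*} {φ : α → ℝ} {A B : Set α}
    (hφ : BddBelow (range φ)) (hAB : ∀ a ∈ A, ∃ b ∈ B, φ b ≤ φ a)
    (hBA : ∀ b ∈ B, ∃ a ∈ A, φ a ≤ φ b) :
    sInf (φ '' A) = sInf (φ '' B) := by
  have hle : ∀ {A B : Set α}, A.Nonempty → (∀ a ∈ A, ∃ b ∈ B, φ b ≤ φ a) →
      sInf (φ '' B) ≤ sInf (φ '' A) := by
    intro A B hA hAB
    refine le_csInf (hA.image φ) ?_
    rintro _ ⟨a, ha, rfl⟩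
    obtain ⟨b, hb, hba⟩ := hAB a ha
    exact (csInf_le (hφ.mono (image_subset_range φ B)) (mem_image_of_mem φ hb)).trans hba
  rcases A.eq_empty_or_nonempty with rfl | hA
  · have hB : B = ∅ := eq_empty_of_forall_notMem fun b hb => by simpa using hBA b hb
    rw [hB]
  · obtain ⟨a, ha⟩ := hA
    obtain ⟨b, hb, -⟩ := hAB a ha
    exact le_antisymm (hle ⟨b, hb⟩ hBA) (hle ⟨a, ha⟩ hAB)

theorem Hits.preimage_ediv {X S : Set ℤ} (h : Hits X S) {d : ℤ} (hd : d ≠ 0) :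
    Hits ((· / d) ⁻¹' X) ((fun x => d * x) '' S) := by
  intro n
  obtain ⟨s, hs, hX⟩ := h (n / d)
  exact ⟨d * s, mem_image_of_mem _ hs, by simpa [Int.add_mul_ediv_left _ _ hd] using hX⟩

theorem Hits.preimage_mul_add {Y S : Set ℤ} {d : ℤ} (h : Hits Y ((fun x => d * x) '' S)) (r : ℤ) :
    Hits ((fun k => d * k + r) ⁻¹' Y) S := by
  intro n
  obtain ⟨_, ⟨s, hs, rfl⟩, hY⟩ := h (d * n + r)
  exact ⟨s, hs, by simpa only [mem_preimage, mul_add, add_right_comm] using hY⟩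

section Density

noncomputable def windowDensity (X : Set ℤ) (N : ℕ) : ℝ :=
  ((X ∩ Icc (-(N : ℤ)) N).ncard : ℝ) / (2 * N + 1)

theorem lowerDensity_eq_liminf (X : Set ℤ) :
    lowerDensity X = liminf (windowDensity X) atTop := rfl

theorem windowDensity_nonneg (X : Set ℤ) : 0 ≤ windowDensity X := fun _ => by
  unfold windowDensity; positivity

theorem windowDensity_le_one (X : Set ℤ) (N : ℕ) : windowDensity X N ≤ 1 := by
  rw [windowDensity, div_le_one (by positivity)]
  have h := ncard_le_ncard (inter_subset_right (s := X)) (finite_Icc (-(N : ℤ)) N)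
  rw [← Finset.coe_Icc, ncard_coe_finset, Int.card_Icc] at h
  exact_mod_cast (h.trans (by omega) : _ ≤ 2 * N + 1)

theorem bddAbove_range_windowDensity (X : Set ℤ) : BddAbove (range (windowDensity X)) :=
  ⟨1, forall_mem_range.2 (windowDensity_le_one X)⟩

theorem lowerDensity_nonneg (X : Set ℤ) : 0 ≤ lowerDensity X :=
  le_liminf_of_le (isCoboundedUnder_ge_of_le atTop (windowDensity_le_one X))
    (.of_forall (windowDensity_nonneg X))

variable {d : ℕ}

theorem ncard_preimage_ediv_inter_Icc_le (X : Set ℤ) (hd : 0 < d) (M : ℕ) :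
    ((· / (d : ℤ)) ⁻¹' X ∩ Icc (-(d * M : ℤ)) (d * M)).ncard ≤
      (X ∩ Icc (-(M : ℤ)) M).ncard * d := by
  have hd' : (0 : ℤ) < d := by exact_mod_cast hd
  calc _ ≤ ((X ∩ Icc (-(M : ℤ)) M) ×ˢ Ico (0 : ℤ) d).ncard := by
        refine ncard_le_ncard_of_injOn (fun m => (m / d, m % d)) ?_ ?_
          (((finite_Icc _ _).inter_of_right X).prod (finite_Ico _ _))
        · rintro m ⟨hmX, hm₁, hm₂⟩
          refine ⟨⟨hmX, ?_, ?_⟩, Int.emod_nonneg m hd'.ne', Int.emod_lt_of_pos m hd'⟩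
          · rw [Int.le_ediv_iff_mul_le hd']; linarith
          · rw [Int.ediv_le_iff_le_mul hd']; linarith
        · intro m _ m' _ h
          rw [Prod.mk.injEq] at h
          rw [← Int.ediv_mul_add_emod m d, ← Int.ediv_mul_add_emod m' d, h.1, h.2]
    _ = _ := by
        rw [ncard_prod, ← Finset.coe_Ico, ncard_coe_finset, Int.card_Ico]
        simp

theorem windowDensity_preimage_ediv_le (X : Set ℤ) (hd : 0 < d) (M : ℕ) :
    windowDensity ((· / (d : ℤ)) ⁻¹' X) (d * M) ≤
      d * ((2 * M + 1 : ℝ) / (2 * (d * M : ℕ) + 1)) * windowDensity X M := by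
  have h := ncard_preimage_ediv_inter_Icc_le X hd M
  unfold windowDensity
  push_cast
  calc _ ≤ ((X ∩ Icc (-(M : ℤ)) M).ncard * d : ℝ) / (2 * (d * M) + 1) := by
        gcongr; exact_mod_cast h
    _ = _ := by field_simp

theorem lowerDensity_preimage_ediv_le (X : Set ℤ) (hd : 0 < d) :
    lowerDensity ((· / (d : ℤ)) ⁻¹' X) ≤ lowerDensity X := by
  have hd' : (0 : ℝ) < d := by exact_mod_cast hd
  have hr : Tendsto (fun M : ℕ => d * ((2 * M + 1 : ℝ) / (2 * (d * M : ℕ) + 1))) atTop (𝓝 1) := by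
    have h := (tendsto_two_mul_add_one_div (ψ := fun M => d * M) (inv_pos.2 hd') (C := 0)
      fun M => by simp [hd'.ne']).const_mul (d : ℝ)
    rwa [mul_inv_cancel₀ hd'.ne'] at h
  simpa [lowerDensity_eq_liminf] using liminf_le_mul_liminf_of_comp_le
    (tendsto_id.const_mul_atTop' hd) one_pos hr (windowDensity_nonneg _)
    (bddAbove_range_windowDensity _) (windowDensity_nonneg X) (bddAbove_range_windowDensity X)
    (.of_forall (windowDensity_preimage_ediv_le X hd))

theorem sum_ncard_preimage_mul_add_inter_Icc_le (Y : Set ℤ) {M N : ℕ} (hd : 0 < d)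
    (hMN : d * (M + 1) ≤ N + 1) :
    ∑ r ∈ Finset.range d, ((fun k : ℤ => d * k + r) ⁻¹' Y ∩ Icc (-(M : ℤ)) M).ncard ≤
      (Y ∩ Icc (-(N : ℤ)) N).ncard := by
  have hd' : (0 : ℤ) < d := by exact_mod_cast hd
  set s : ℕ → Set ℤ := fun r =>
    (fun k : ℤ => d * k + r) '' ((fun k : ℤ => d * k + r) ⁻¹' Y ∩ Icc (-(M : ℤ)) M)
  have hinj : ∀ r : ℕ, Function.Injective (fun k : ℤ => d * k + r) := fun r _ _ h =>
    mul_left_cancel₀ hd'.ne' (add_right_cancel h)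
  have hemod : ∀ r ∈ Finset.range d, ∀ m ∈ s r, m % d = r := by
    rintro r hr _ ⟨k, -, rfl⟩
    rw [Finset.mem_range] at hr
    dsimp only
    rw [add_comm, Int.add_mul_emod_self_left]
    exact Int.emod_eq_of_lt (by positivity) (by exact_mod_cast hr)
  calc ∑ r ∈ Finset.range d, ((fun k : ℤ => d * k + r) ⁻¹' Y ∩ Icc (-(M : ℤ)) M).ncard
      = ∑ r ∈ Finset.range d, (s r).ncard :=
        Finset.sum_congr rfl fun r _ => (ncard_image_of_injective _ (hinj r)).symm
    _ = (⋃ r ∈ (Finset.range d : Set ℕ), s r).ncard := by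
        rw [(Finset.finite_toSet _).ncard_biUnion, finsum_mem_coe_finset]
        · exact fun r _ => ((finite_Icc _ _).inter_of_right _).image _
        · intro r hr r' hr' hne
          refine disjoint_left.2 fun m hm hm' => hne ?_
          exact_mod_cast (hemod r hr m hm).symm.trans (hemod r' hr' m hm')
    _ ≤ (Y ∩ Icc (-(N : ℤ)) N).ncard := by
        refine ncard_le_ncard ?_ ((finite_Icc _ _).inter_of_right _)
        simp only [iUnion_subset_iff]
        rintro r hr _ ⟨k, ⟨hkY, hk₁, hk₂⟩, rfl⟩
        have hr' : (r : ℤ) < d := by exact_mod_cast Finset.mem_range.1 hr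
        refine ⟨hkY, ?_, ?_⟩ <;> nlinarith

theorem abs_mul_div_sub_one_sub_le (hd : 0 < d) (N : ℕ) :
    |(d : ℝ) * (N / d - 1 : ℕ) - N| ≤ 2 * d := by
  have h₁ : d * (N / d - 1) ≤ N :=
    (Nat.mul_le_mul_left d (Nat.sub_le _ 1)).trans (Nat.mul_div_le N d)
  have h₂ : N ≤ d * (N / d - 1) + 2 * d :=
    calc N ≤ d * (N / d + 1) := (Nat.lt_mul_div_succ N hd).le
      _ ≤ d * (N / d - 1 + 2) := Nat.mul_le_mul_left d (by omega)
      _ = d * (N / d - 1) + 2 * d := by ring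
  have h₁' : (d : ℝ) * (N / d - 1 : ℕ) ≤ N := by exact_mod_cast h₁
  have h₂' : (N : ℝ) ≤ d * (N / d - 1 : ℕ) + 2 * d := by exact_mod_cast h₂
  rw [abs_le]
  constructor <;> linarith

theorem sum_windowDensity_preimage_mul_add_le (Y : Set ℤ) (hd : 0 < d) {N : ℕ} (hN : d ≤ N) :
    ∑ r ∈ Finset.range d, windowDensity ((fun k : ℤ => d * k + r) ⁻¹' Y) (N / d - 1) ≤
      (2 * N + 1 : ℝ) / (2 * (N / d - 1 : ℕ) + 1) * windowDensity Y N := by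
  have hcount := sum_ncard_preimage_mul_add_inter_Icc_le Y (M := N / d - 1) (N := N) hd <| by
    have : 1 ≤ N / d := (Nat.one_le_div_iff hd).2 hN
    rw [Nat.sub_add_cancel this]
    exact (Nat.mul_div_le N d).trans N.le_succ
  simp only [windowDensity, ← Finset.sum_div]
  rw [div_mul_div_comm, mul_comm (2 * (N : ℝ) + 1), ← div_mul_div_comm, div_self (by positivity),
    mul_one]
  gcongr
  exact_mod_cast hcount

theorem sum_lowerDensity_preimage_mul_add_le (Y : Set ℤ) (hd : 0 < d) :
    ∑ r ∈ Finset.range d, lowerDensity ((fun k : ℤ => d * k + r) ⁻¹' Y) ≤ d * lowerDensity Y := by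
  have hd' : (0 : ℝ) < d := by exact_mod_cast hd
  calc ∑ r ∈ Finset.range d, lowerDensity ((fun k : ℤ => d * k + r) ⁻¹' Y)
      ≤ liminf (fun N => ∑ r ∈ Finset.range d,
          windowDensity ((fun k : ℤ => d * k + r) ⁻¹' Y) N) atTop :=
        sum_liminf_le_liminf_sum _ (fun r _ => windowDensity_nonneg _)
          (fun r _ => windowDensity_le_one _)
    _ ≤ d * lowerDensity Y :=
        liminf_le_mul_liminf_of_comp_le
          ((tendsto_sub_atTop_nat 1).comp (Nat.tendsto_div_const_atTop hd.ne')) hd'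
          (tendsto_two_mul_add_one_div hd' (abs_mul_div_sub_one_sub_le hd))
          (fun N => Finset.sum_nonneg fun r _ => windowDensity_nonneg _ N)
          ⟨d, forall_mem_range.2 fun N => by
            simpa using Finset.sum_le_sum fun r (_ : r ∈ Finset.range d) =>
              windowDensity_le_one ((fun k : ℤ => d * k + r) ⁻¹' Y) N⟩
          (windowDensity_nonneg Y) (bddAbove_range_windowDensity Y)
          ((eventually_ge_atTop d).mono fun _ hN => sum_windowDensity_preimage_mul_add_le Y hd hN)

theorem exists_lowerDensity_preimage_mul_add_le (Y : Set ℤ) (hd : 0 < d) :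
    ∃ r : ℕ, lowerDensity ((fun k : ℤ => d * k + r) ⁻¹' Y) ≤ lowerDensity Y := by
  obtain ⟨r, -, hr⟩ := Finset.exists_le_of_sum_le (Finset.nonempty_range_iff.2 hd.ne')
    (g := fun _ => lowerDensity Y) (by simpa using sum_lowerDensity_preimage_mul_add_le Y hd)
  exact ⟨r, hr⟩

end Density

theorem stmt5_general (d : ℤ) (hd : 0 < d) (F : Set (Set ℤ)) :
    piercing ((fun S => (fun x => d * x) '' S) '' F) = piercing F := by
  lift d to ℕ using hd.le
  have hd₀ : 0 < d := by exact_mod_cast hd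
  refine sInf_image_eq_of_forall_exists_le ⟨0, forall_mem_range.2 lowerDensity_nonneg⟩ ?_ ?_
  · intro Y hY
    obtain ⟨r, hr⟩ := exists_lowerDensity_preimage_mul_add_le Y hd₀
    exact ⟨_, fun S hS => (hY _ (mem_image_of_mem _ hS)).preimage_mul_add r, hr⟩
  · intro X hX
    refine ⟨_, ?_, lowerDensity_preimage_ediv_le X hd₀⟩
    rintro _ ⟨S, hS, rfl⟩
    exact (hX S hS).preimage_ediv (by positivity)

theorem stmt5 (d : ℤ) (hd : 0 < d) (F : Set (Set ℤ)) (hF : F.Finite)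
    (hships : ∀ S ∈ F, S.Finite) :
    piercing ((fun S => (fun x => d * x) '' S) '' F) = piercing F :=
  stmt5_general d hd F
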